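/- There is no wait-free verifier that distributed runtime verifies linearizability for the queue object: for any candidate verifier using arbitrary base objects, there exist two indistinguishable infinite executions E and F (with the same per-process local state sequences) such that all finite prefixes of F restricted to the implementation are linearizable while some finite prefix of E restricted to the implementation is not, so the verifier violates soundness or completeness. -/

import Mathlib

namespace RV

/-- Queue operation descriptions. -/
inductive QOp where
  | enq (x : ℕ)
  | deq
deriving DecidableEq

/-- Response values: `ok` for Enq (true), a value, or `empty` for Deq. -/
inductive QVal where
  | ok
  | val (x : ℕ)
  | empty
deriving DecidableEq

/-- Events: invocation by process `p` of operation `o` with description `d`, or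
response to process `p` of operation `o` with value `v`. -/
inductive QEv where
  | inv (p o : ℕ) (d : QOp)
  | res (p o : ℕ) (v : QVal)
deriving DecidableEq

abbrev QHist := List QEv

def QEv.proc : QEv → ℕ
  | .inv p _ _ => p
  | .res p _ _ => p

def QEv.opid : QEv → ℕ
  | .inv _ o _ => o
  | .res _ o _ => o

def QEv.isInv : QEv → Bool
  | .inv _ _ _ => true
  | .res _ _ _ => false

/-- Process `p`'s subsequence of events. -/
def qproj (E : QHist) (p : ℕ) : QHist := E.filter (fun e => e.proc == p)

def qEquivalent (E F : QHist) : Prop := ∀ p, qproj E p = qproj F p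

/-- Operation `a` precedes operation `b`: the response of `a` occurs before the
invocation of `b`. -/
def qprec (E : QHist) (a b : ℕ) : Prop :=
  ∃ i j p q v d, i < j ∧ E[(i : ℕ)]? = some (QEv.res p a v) ∧
    E[(j : ℕ)]? = some (QEv.inv q b d)

def qPending (E : QHist) (o : ℕ) : Prop :=
  (∃ p d, QEv.inv p o d ∈ E) ∧ ∀ p v, QEv.res p o v ∉ E

def qhasRes (E : QHist) (o : ℕ) : Bool := E.any fun e => !e.isInv && e.opid == o

/-- Remove the invocations of pending operations. -/
def qcomp (E : QHist) : QHist := E.filter fun e => !e.isInv || qhasRes E e.opid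

/-- `E'` extends `E` by appending responses to some pending operations. -/
def qIsExtension (E E' : QHist) : Prop :=
  ∃ rs : QHist, E' = E ++ rs ∧
    (∀ e ∈ rs, e.isInv = false ∧ qPending E e.opid ∧
      ∃ d, QEv.inv e.proc e.opid d ∈ E) ∧
    rs.Pairwise fun a b => a.opid ≠ b.opid

/-- Per-process alternation: invocation, matching response, ..., possibly a final
pending invocation. -/
inductive QAlt : QHist → Prop where
  | nil : QAlt []
  | pend (p o : ℕ) (d : QOp) : QAlt [QEv.inv p o d]
  | step (p o : ℕ) (d : QOp) (v : QVal) (l : QHist) :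
      QAlt l → QAlt (QEv.inv p o d :: QEv.res p o v :: l)

def QWellFormed (E : QHist) : Prop :=
  (∀ p, QAlt (qproj E p)) ∧
  (∀ o, E.countP (fun e => e.isInv && e.opid == o) ≤ 1) ∧
  (∀ o, E.countP (fun e => !e.isInv && e.opid == o) ≤ 1)

/-- The sequential queue state machine: `QRun q S` holds when `S` is a sequential
history generated from queue state `q`. Enq(x) appends `x` and returns `ok`
(true); Deq removes and returns the head, or `empty` on the empty queue. -/
inductive QRun : List ℕ → QHist → Prop where
  | nil (q : List ℕ) : QRun q []
  | enq (q : List ℕ) (l : QHist) (p o x : ℕ) :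
      QRun (q ++ [x]) l → QRun q (QEv.inv p o (.enq x) :: QEv.res p o .ok :: l)
  | deqE (l : QHist) (p o : ℕ) :
      QRun [] l → QRun [] (QEv.inv p o .deq :: QEv.res p o .empty :: l)
  | deq (q : List ℕ) (l : QHist) (x p o : ℕ) :
      QRun q l → QRun (x :: q) (QEv.inv p o .deq :: QEv.res p o (.val x) :: l)

/-- Linearizability with respect to the sequential queue. -/
def QueueLin (E : QHist) : Prop :=
  ∃ E', qIsExtension E E' ∧ ∃ S, QRun [] S ∧ qEquivalent (qcomp E') S ∧
    ∀ a b, qprec (qcomp E') a b → qprec S a b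

/-!
A verifier's verdict can depend only on the per-process projections `qproj H`, and these do not
change when two operations of different processes trade places. In `enqOne ++ deqOne` process 2
enqueues 1 and then process 1 dequeues it, which is linearizable prefix by prefix. In
`deqOne ++ enqOne` the dequeue returns 1 before the enqueue is invoked; this history has no pending
operations, so a linearization must be a queue run that respects this real-time order, and in a
queue run from the empty queue a value can only be dequeued after it was enqueued.
-/

theorem qEquivalent.perm {E F : QHist} (h : qEquivalent E F) : E.Perm F := by
  refine List.perm_iff_count.2 fun e => ?_
  calc E.count e = (qproj E e.proc).count e := (List.count_filter (by simp)).symm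
    _ = (qproj F e.proc).count e := by rw [h]
    _ = F.count e := List.count_filter (by simp)

theorem QWellFormed.of_qEquivalent {E F : QHist} (h : qEquivalent E F) (hE : QWellFormed E) :
    QWellFormed F := by
  obtain ⟨halt, hinv, hres⟩ := hE
  refine ⟨fun p => h p ▸ halt p, fun o => ?_, fun o => ?_⟩
  · exact h.perm.countP_eq _ ▸ hinv o
  · exact h.perm.countP_eq _ ▸ hres o

theorem qEquivalent_append_comm {a b : QHist} (h : ∀ e ∈ a, ∀ e' ∈ b, e.proc ≠ e'.proc) :
    qEquivalent (a ++ b) (b ++ a) := by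
  intro p
  simp only [qproj, List.filter_append]
  by_cases ha : ∃ e ∈ a, e.proc = p
  · obtain ⟨e, he, rfl⟩ := ha
    have hb : b.filter (fun e' => e'.proc == e.proc) = [] :=
      List.filter_eq_nil_iff.2 fun e' he' => by simpa using (h e he e' he').symm
    simp [hb]
  · have ha : a.filter (fun e => e.proc == p) = [] :=
      List.filter_eq_nil_iff.2 fun e he => by simpa using fun hp => ha ⟨e, he, hp⟩
    simp [ha]

theorem qIsExtension.eq_of_forall_not_qPending {E E' : QHist} (h : qIsExtension E E')
    (hE : ∀ o, ¬ qPending E o) : E' = E := by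
  obtain ⟨rs, rfl, hrs, -⟩ := h
  cases rs with
  | nil => simp
  | cons e _ => exact absurd (hrs e List.mem_cons_self).2.1 (hE _)

theorem queueLin_of_qRun_qcomp {P : QHist} (h : QRun [] (qcomp P)) : QueueLin P :=
  ⟨P, ⟨[], by simp, by simp, .nil⟩, qcomp P, h, fun _ => rfl, fun _ _ => id⟩

theorem QRun.mem_or_exists_enq_of_deq {q : List ℕ} {S : QHist} (hS : QRun q S) {i p o x : ℕ}
    (hi : S[i]? = some (.res p o (.val x))) :
    x ∈ q ∨ ∃ j < i, ∃ p' o', S[j]? = some (.inv p' o' (.enq x)) := by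
  induction hS generalizing i with
  | nil => simp at hi
  | enq q l p' o' y _ ih =>
    rcases i with _ | _ | i
    · simp at hi
    · simp at hi
    rcases ih hi with hx | ⟨j, hj, p'', o'', hj'⟩
    · rcases List.mem_append.1 hx with hx | hx
      · exact .inl hx
      · obtain rfl := List.mem_singleton.1 hx
        exact .inr ⟨0, by omega, p', o', rfl⟩
    · exact .inr ⟨j + 2, by omega, p'', o'', hj'⟩
  | deqE l p' o' _ ih =>
    rcases i with _ | _ | i
    · simp at hi
    · simp at hi
    rcases ih hi with hx | ⟨j, hj, p'', o'', hj'⟩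
    · simp at hx
    · exact .inr ⟨j + 2, by omega, p'', o'', hj'⟩
  | deq q l y p' o' _ ih =>
    rcases i with _ | _ | i
    · simp at hi
    · obtain ⟨-, -, rfl⟩ : p' = p ∧ o' = o ∧ y = x := by simpa using hi
      exact .inl List.mem_cons_self
    rcases ih hi with hx | ⟨j, hj, p'', o'', hj'⟩
    · exact .inl (List.mem_cons_of_mem _ hx)
    · exact .inr ⟨j + 2, by omega, p'', o'', hj'⟩

def deqOne : QHist := [.inv 1 1 .deq, .res 1 1 (.val 1)]

def enqOne : QHist := [.inv 2 2 (.enq 1), .res 2 2 .ok]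

theorem qEquivalent_deqOne_enqOne : qEquivalent (deqOne ++ enqOne) (enqOne ++ deqOne) :=
  qEquivalent_append_comm (by simp [deqOne, enqOne, QEv.proc])

theorem qWellFormed_deqOne_enqOne : QWellFormed (deqOne ++ enqOne) := by
  refine ⟨fun p => ?_, fun o => ?_, fun o => ?_⟩
  · by_cases h1 : p = 1
    · subst h1; exact .step 1 1 .deq (.val 1) [] .nil
    by_cases h2 : p = 2
    · subst h2; exact .step 2 2 (.enq 1) .ok [] .nil
    rw [qproj, List.filter_eq_nil_iff.2 (by simp [enqOne, deqOne, QEv.proc, Ne.symm h1, Ne.symm h2])]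
    exact .nil
  all_goals
    simp only [enqOne, deqOne, List.cons_append, List.nil_append, List.countP_cons, List.countP_nil,
      QEv.isInv, QEv.opid, Bool.not_true, Bool.not_false, Bool.true_and, Bool.false_and,
      beq_iff_eq, Bool.false_eq_true, if_false]
    split_ifs <;> omega

theorem queueLin_of_prefix_enqOne_deqOne {P : QHist} (hP : P <+: enqOne ++ deqOne) :
    QueueLin P := by
  rw [← List.mem_inits] at hP
  simp only [enqOne, deqOne, List.cons_append, List.nil_append, List.inits, List.mem_cons,
    List.map_cons, List.map_nil, List.not_mem_nil, or_false] at hP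
  apply queueLin_of_qRun_qcomp
  rcases hP with rfl | rfl | rfl | rfl | rfl
  · exact .nil _
  · exact .nil _
  · exact .enq [] [] 2 2 1 (.nil _)
  · exact .enq [] [] 2 2 1 (.nil _)
  · exact .enq [] _ 2 2 1 (.deq [] [] 1 1 1 (.nil []))

theorem mem_deqOne_append_enqOne {e : QEv} : e ∈ deqOne ++ enqOne ↔
    e = .inv 1 1 .deq ∨ e = .res 1 1 (.val 1) ∨ e = .inv 2 2 (.enq 1) ∨ e = .res 2 2 .ok := by
  simp [deqOne, enqOne]

theorem not_qPending_deqOne_enqOne (o : ℕ) : ¬ qPending (deqOne ++ enqOne) o := by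
  rintro ⟨⟨p, d, hinv⟩, hres⟩
  rcases mem_deqOne_append_enqOne.1 hinv with h | h | h | h <;> cases h
  · exact hres 1 (.val 1) (by decide)
  · exact hres 2 .ok (by decide)

theorem not_queueLin_deqOne_enqOne : ¬ QueueLin (deqOne ++ enqOne) := by
  rintro ⟨E', hext, S, hrun, hequiv, hprec⟩
  obtain rfl := hext.eq_of_forall_not_qPending not_qPending_deqOne_enqOne
  have hcomp : qcomp (deqOne ++ enqOne) = deqOne ++ enqOne := by decide
  rw [hcomp] at hequiv hprec
  have hperm := hequiv.perm
  have hnodup : S.Nodup := hperm.nodup_iff.1 (by decide)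
  have hmem {k : ℕ} {e : QEv} (h : S[k]? = some e) :=
    mem_deqOne_append_enqOne.1 (hperm.mem_iff.2 (List.mem_of_getElem? h))
  obtain ⟨i, j, p, q, v, d, hij, hi, hj⟩ := hprec 1 2 ⟨1, 2, 1, 2, _, _, by omega, rfl, rfl⟩
  rcases hmem hi with h | h | h | h <;> cases h
  rcases hmem hj with h | h | h | h <;> cases h
  obtain hx | ⟨k, hki, p', o', hk⟩ := hrun.mem_or_exists_enq_of_deq hi
  · cases hx
  rcases hmem hk with h | h | h | h <;> cases h
  have hjk := (List.getElem?_inj (List.getElem?_eq_some_iff.1 hj).1 hnodup).1 (hj.trans hk.symm)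
  omega

/-- There is no wait-free verifier that distributed runtime verifies
linearizability for the queue. Since the processes run asynchronously, any
verdict of a verifier is a function of the per-process local observation
sequences only; no such function can be simultaneously sound (never reporting
error when every prefix of the implementation's history is linearizable) and
complete (reporting error whenever some prefix is not linearizable), because two
indistinguishable executions — identical per-process observations — can induce a
queue history that is linearizable in one and non-linearizable in the other. -/
theorem no_queue_verifier :
    ¬ ∃ V : (ℕ → QHist) → Bool,
      ∀ H : QHist, QWellFormed H →
        ((∀ P, P <+: H → QueueLin P) → V (qproj H) = false) ∧
        ((∃ P, P <+: H ∧ ¬ QueueLin P) → V (qproj H) = true) := by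
  rintro ⟨V, hV⟩
  have hE := (hV _ qWellFormed_deqOne_enqOne).2
    ⟨_, List.prefix_refl _, not_queueLin_deqOne_enqOne⟩
  have hF := (hV _ (qWellFormed_deqOne_enqOne.of_qEquivalent qEquivalent_deqOne_enqOne)).1
    fun _ => queueLin_of_prefix_enqOne_deqOne
  rw [show qproj (deqOne ++ enqOne) = qproj (enqOne ++ deqOne) from
    funext qEquivalent_deqOne_enqOne] at hE
  exact Bool.false_ne_true (hF.symm.trans hE)

end RV
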